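/- arXiv:1602.04507 — 5 statements merged into one kernel-verified Lean document; each statement's English description precedes it below -/
import Mathlib

section
/- Let D be a superdialgebra over R with a bar-unit 1. Then for all homogeneous a, b, c ∈ D one has a ⊣ [b, c] = [a, b] ⊣ c − (−1)^{|b||c|} ([a ⊣ c, b]) ⊣ 1, where [x, y] := x ⊣ y − (−1)^{|x||y|} y ⊢ x. -/
/-- The sign `(−1)^{αβ}` for degrees `α β : ℤ/2`, as an integer. -/
def ssign (α β : ZMod 2) : ℤ := (-1 : ℤ) ^ (α * β).val

/-- An associative superdialgebra over a commutative unital ring `R`. -/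
structure Superdialgebra (R : Type*) (D : Type*) [CommRing R] [AddCommGroup D]
    [Module R D] where
  grade : ZMod 2 → Submodule R D
  isInternal : DirectSum.IsInternal grade
  ld : D →ₗ[R] D →ₗ[R] D
  rd : D →ₗ[R] D →ₗ[R] D
  ld_assoc : ∀ a b c : D, ld (ld a b) c = ld a (ld b c)
  rd_assoc : ∀ a b c : D, rd (rd a b) c = rd a (rd b c)
  ld_mem : ∀ (α β : ZMod 2) (a b : D), a ∈ grade α → b ∈ grade β → ld a b ∈ grade (α + β)
  rd_mem : ∀ (α β : ZMod 2) (a b : D), a ∈ grade α → b ∈ grade β → rd a b ∈ grade (α + β)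
  di1 : ∀ a b c : D, ld a (ld b c) = ld a (rd b c)
  di2 : ∀ a b c : D, ld (rd a b) c = rd a (ld b c)
  di3 : ∀ a b c : D, rd (ld a b) c = rd (rd a b) c

variable {R D : Type*} [CommRing R] [AddCommGroup D] [Module R D]

/-- A bar-unit of a superdialgebra: an even element `e` with `a ⊣ e = a = e ⊢ a`. -/
def IsBarUnit (S : Superdialgebra R D) (e : D) : Prop :=
  e ∈ S.grade 0 ∧ ∀ a : D, S.ld a e = a ∧ S.rd e a = a

/-- The bracket `[a,b] = a ⊣ b − (−1)^{αβ} b ⊢ a` of elements `a, b` of degrees `α, β`. -/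
def sbracket (S : Superdialgebra R D) (α β : ZMod 2) (a b : D) : D :=
  S.ld a b - ssign α β • S.rd b a

lemma ssign_mul_ssign_add (α β γ : ZMod 2) : ssign β γ * ssign (α + γ) β = ssign α β := by
  revert α β γ; decide

namespace Superdialgebra

variable (S : Superdialgebra R D)

lemma ld_sbracket (β γ : ZMod 2) (a b c : D) :
    S.ld a (sbracket S β γ b c) = S.ld (S.ld a b) c - ssign β γ • S.ld (S.ld a c) b := by
  rw [sbracket, map_sub, map_zsmul, ← S.di1, S.ld_assoc, S.ld_assoc]

lemma sbracket_ld (α β : ZMod 2) (a b c : D) :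
    S.ld (sbracket S α β a b) c = S.ld (S.ld a b) c - ssign α β • S.rd b (S.ld a c) := by
  rw [sbracket, map_sub, map_zsmul, LinearMap.sub_apply, LinearMap.smul_apply, S.di2]

lemma ld_barUnit {e : D} (he : IsBarUnit S e) (a : D) : S.ld a e = a :=
  (he.2 a).1

end Superdialgebra

theorem barUnit_identity_one_general
    (S : Superdialgebra R D) (e : D) (he : IsBarUnit S e)
    (α β γ : ZMod 2) (a b c : D) :
    S.ld a (sbracket S β γ b c) =
      S.ld (sbracket S α β a b) c -
        ssign β γ • S.ld (sbracket S (α + γ) β (S.ld a c) b) e := by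
  rw [S.ld_sbracket, S.sbracket_ld, S.ld_barUnit he, sbracket, smul_sub, smul_smul,
    ssign_mul_ssign_add]
  abel

/-- in a unital superdialgebra, for homogeneous `a, b, c` one has
`a ⊣ [b,c] = [a,b] ⊣ c − (−1)^{|b||c|} ([a ⊣ c, b]) ⊣ 1`. -/
theorem barUnit_identity_one
    (S : Superdialgebra R D) (e : D) (he : IsBarUnit S e)
    (α β γ : ZMod 2) (a b c : D)
    (ha : a ∈ S.grade α) (hb : b ∈ S.grade β) (hc : c ∈ S.grade γ) :
    S.ld a (sbracket S β γ b c) =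
      S.ld (sbracket S α β a b) c -
        ssign β γ • S.ld (sbracket S (α + γ) β (S.ld a c) b) e :=
  barUnit_identity_one_general S e he α β γ a b c
end

section
/- Let D be a superdialgebra over R with a bar-unit 1. Then for all homogeneous a, b, c ∈ D one has [a, b] ⊢ c = −(−1)^{|b||c|} a ⊢ [c, b] + (−1)^{|b||c|} 1 ⊢ [a ⊢ c, b], where [x, y] := x ⊣ y − (−1)^{|x||y|} y ⊢ x. -/
variable {R D : Type*} [CommRing R] [AddCommGroup D] [Module R D]

/-!
Once `e ⊢` is dropped, both sides expand, via the dialgebra axioms and associativity of `⊢`, into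
`a ⊢ (b ⊢ c)`, `b ⊢ (a ⊢ c)` and `a ⊢ (c ⊣ b)`; the last term cancels, and the signs agree because
`ssign` is symmetric, bimultiplicative and squares to `1`.
-/

lemma ssign_comm (α β : ZMod 2) : ssign α β = ssign β α := by
  rw [ssign, ssign, mul_comm]

lemma ssign_mul_self : ∀ α β : ZMod 2, ssign α β * ssign α β = 1 := by decide

lemma ssign_add_left : ∀ α β γ : ZMod 2, ssign (α + β) γ = ssign α γ * ssign β γ := by decide

namespace Superdialgebra

variable (S : Superdialgebra R D) (α β γ : ZMod 2) (a b c : D)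

lemma rd_sbracket_left :
    S.rd (sbracket S α β a b) c = S.rd a (S.rd b c) - ssign α β • S.rd b (S.rd a c) := by
  simp only [sbracket, map_sub, map_zsmul, LinearMap.sub_apply, LinearMap.smul_apply]
  rw [S.di3, S.rd_assoc, S.rd_assoc]

lemma rd_sbracket_right :
    S.rd a (sbracket S β γ b c) = S.rd a (S.ld b c) - ssign β γ • S.rd a (S.rd c b) := by
  simp only [sbracket, map_sub, map_zsmul]

lemma sbracket_rd_left :
    sbracket S α β (S.rd a c) b = S.rd a (S.ld c b) - ssign α β • S.rd b (S.rd a c) := by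
  rw [sbracket, S.di2]

end Superdialgebra

theorem barUnit_identity_two_general
    (S : Superdialgebra R D) (e : D) (he : IsBarUnit S e)
    (α β γ : ZMod 2) (a b c : D) :
    S.rd (sbracket S α β a b) c =
      -(ssign β γ • S.rd a (sbracket S γ β c b)) +
        ssign β γ • S.rd e (sbracket S (α + γ) β (S.rd a c) b) := by
  have sign_cancel : ssign β γ * ssign γ β = 1 := by rw [ssign_comm γ, ssign_mul_self]
  have sign_shift : ssign β γ * ssign (α + γ) β = ssign α β := by
    rw [ssign_add_left, ssign_comm β γ, mul_left_comm, ssign_mul_self, mul_one]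
  rw [(he.2 _).2, S.rd_sbracket_left, S.rd_sbracket_right, S.sbracket_rd_left,
    smul_sub, smul_sub, smul_smul, smul_smul, sign_cancel, sign_shift, one_smul]
  abel

/-- in a unital superdialgebra, for homogeneous `a, b, c` one has
`[a,b] ⊢ c = −(−1)^{|b||c|} a ⊢ [c,b] + (−1)^{|b||c|} 1 ⊢ [a ⊢ c, b]`. -/
theorem barUnit_identity_two
    (S : Superdialgebra R D) (e : D) (he : IsBarUnit S e)
    (α β γ : ZMod 2) (a b c : D)
    (ha : a ∈ S.grade α) (hb : b ∈ S.grade β) (hc : c ∈ S.grade γ) :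
    S.rd (sbracket S α β a b) c =
      -(ssign β γ • S.rd a (sbracket S γ β c b)) +
        ssign β γ • S.rd e (sbracket S (α + γ) β (S.rd a c) b) :=
  barUnit_identity_two_general S e he α β γ a b c
end

section
/- Let D be a superdialgebra over R with a bar-unit 1. Writing [D,D] for the R-submodule spanned by all [a,b] := a ⊣ b − (−1)^{|a||b|} b ⊢ a with a, b homogeneous, and, for submodules S, T ⊆ D, S ⊣ T (resp. S ⊢ T) for the R-submodule spanned by all s ⊣ t (resp. s ⊢ t) with s ∈ S, t ∈ T, one has: D ⊣ [D,D] ⊆ [D,D] ⊣ D, [D,D] ⊢ D ⊆ D ⊢ [D,D], and [D,D] ⊣ D = D ⊢ [D,D]. -/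
variable {R D : Type*} [CommRing R] [AddCommGroup D] [Module R D]

/-- The set of super-commutators `a ⊣ b − (−1)^{|a||b|} b ⊢ a` of homogeneous elements. -/
def commGens (S : Superdialgebra R D) : Set D :=
  {z : D | ∃ (α β : ZMod 2) (a b : D), a ∈ S.grade α ∧ b ∈ S.grade β ∧
    z = S.ld a b - ssign α β • S.rd b a}

/-- `[D,D]`: the `R`-submodule spanned by the super-commutators. -/
def commSub (S : Superdialgebra R D) : Submodule R D :=
  Submodule.span R (commGens S)

/-!
Each inclusion is checked on spanning elements: by bilinearity it suffices to multiply a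
generating super-commutator `[x,y]` by a homogeneous `c`. For these, the dialgebra axioms
give explicit identities expressing the product through elements of the target submodule;
the bar-unit turns a lone super-commutator into `[u,v] ⊣ e` or `e ⊢ [u,v]`. For
`[D,D] ⊢ D ⊆ D ⊢ [D,D]` the identity also involves `c ⊣ [x,y]` and `[u,v] ⊣ y`, which are
handled by the first inclusion and by `[D,D] ⊣ D = D ⊢ [D,D]`.
-/

section

variable (S : Superdialgebra R D)

lemma sbracket_mem_commSub {α β : ZMod 2} {x y : D} (hx : x ∈ S.grade α) (hy : y ∈ S.grade β) :
    sbracket S α β x y ∈ commSub S :=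
  Submodule.subset_span ⟨α, β, x, y, hx, hy, rfl⟩

lemma top_eq_span_homogeneous :
    (⊤ : Submodule R D) = Submodule.span R (⋃ γ, (S.grade γ : Set D)) := by
  rw [← Submodule.iSup_eq_span, S.isInternal.submodule_iSup_eq_top]

lemma map₂_top_commSub_le {M : Type*} [AddCommGroup M] [Module R M]
    (f : D →ₗ[R] D →ₗ[R] M) (P : Submodule R M)
    (h : ∀ (γ α β : ZMod 2) (c x y : D), c ∈ S.grade γ → x ∈ S.grade α → y ∈ S.grade β →
      f c (sbracket S α β x y) ∈ P) :
    Submodule.map₂ f ⊤ (commSub S) ≤ P := by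
  rw [top_eq_span_homogeneous S, commSub, Submodule.map₂_span_span, Submodule.span_le]
  rintro _ ⟨c, hc, _, ⟨α, β, x, y, hx, hy, rfl⟩, rfl⟩
  obtain ⟨γ, hc⟩ := Set.mem_iUnion.1 hc
  exact h γ α β c x y hc hx hy

lemma map₂_commSub_top_le {M : Type*} [AddCommGroup M] [Module R M]
    (f : D →ₗ[R] D →ₗ[R] M) (P : Submodule R M)
    (h : ∀ (γ α β : ZMod 2) (c x y : D), c ∈ S.grade γ → x ∈ S.grade α → y ∈ S.grade β →
      f (sbracket S α β x y) c ∈ P) :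
    Submodule.map₂ f (commSub S) ⊤ ≤ P := by
  rw [← Submodule.map₂_flip]
  exact map₂_top_commSub_le S f.flip P h

lemma ld_sbracket_eq {e : D} (hld : ∀ a, S.ld a e = a) (γ α β : ZMod 2) (c x y : D) :
    S.ld c (sbracket S α β x y)
      = S.ld (sbracket S γ α c x) y
        - ssign α β • S.ld (sbracket S (γ + β) α (S.ld c y) x) e := by
  simp only [sbracket, map_sub, map_zsmul, LinearMap.sub_apply, LinearMap.smul_apply,
    smul_sub, smul_smul, hld, S.ld_assoc, S.di1, S.di2]
  match_scalars <;> revert γ α β <;> decide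

lemma sbracket_ld_eq {e : D} (hrd : ∀ a, S.rd e a = a) (α β δ : ZMod 2) (x y d : D) :
    S.ld (sbracket S α β x y) d
      = S.rd e (sbracket S α (β + δ) x (S.ld y d))
        - ssign α β • S.rd y (sbracket S α δ x d) := by
  simp only [sbracket, map_sub, map_zsmul, LinearMap.sub_apply, LinearMap.smul_apply,
    smul_sub, smul_smul, hrd, S.ld_assoc, S.di1, S.di2, S.di3, S.rd_assoc]
  match_scalars <;> revert α β δ <;> decide

lemma rd_sbracket_eq {e : D} (hld : ∀ a, S.ld a e = a) (α β δ : ZMod 2) (x y d : D) :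
    S.rd d (sbracket S α β x y)
      = ssign α δ • S.ld (sbracket S α (δ + β) x (S.rd d y)) e
        - ssign α δ • S.ld (sbracket S α δ x d) y := by
  simp only [sbracket, map_sub, map_zsmul, LinearMap.sub_apply, LinearMap.smul_apply,
    smul_sub, smul_smul, hld, S.ld_assoc, S.di1, S.di2, S.rd_assoc]
  match_scalars <;> revert α β δ <;> decide

lemma sbracket_rd_eq (α β γ : ZMod 2) (x y c : D) :
    S.rd (sbracket S α β x y) c
      = (ssign γ α * ssign γ β) • S.ld c (sbracket S α β x y)
        - (ssign γ α * ssign γ β) • S.ld (sbracket S γ α c x) y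
        + (ssign α β * (ssign γ α * ssign γ β)) • S.ld (sbracket S γ β c y) x
        - ssign γ β • S.rd x (sbracket S γ β c y)
        + (ssign α β * ssign γ α) • S.rd y (sbracket S γ α c x) := by
  simp only [sbracket, map_sub, map_zsmul, LinearMap.sub_apply, LinearMap.smul_apply,
    smul_sub, smul_smul, S.ld_assoc, S.di1, S.di2, S.di3, S.rd_assoc]
  match_scalars <;> revert α β γ <;> decide

lemma map₂_ld_top_commSub_le {e : D} (hld : ∀ a, S.ld a e = a) :
    Submodule.map₂ S.ld ⊤ (commSub S) ≤ Submodule.map₂ S.ld (commSub S) ⊤ := by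
  refine map₂_top_commSub_le S _ _ fun γ α β c x y hc hx hy => ?_
  rw [ld_sbracket_eq S hld γ α β]
  exact sub_mem
    (Submodule.apply_mem_map₂ _ (sbracket_mem_commSub S hc hx) Submodule.mem_top)
    (zsmul_mem (Submodule.apply_mem_map₂ _
      (sbracket_mem_commSub S (S.ld_mem γ β c y hc hy) hx) Submodule.mem_top) _)

lemma map₂_ld_commSub_top_le {e : D} (hrd : ∀ a, S.rd e a = a) :
    Submodule.map₂ S.ld (commSub S) ⊤ ≤ Submodule.map₂ S.rd ⊤ (commSub S) := by
  refine map₂_commSub_top_le S _ _ fun δ α β d x y hd hx hy => ?_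
  rw [sbracket_ld_eq S hrd α β δ]
  exact sub_mem
    (Submodule.apply_mem_map₂ _ Submodule.mem_top
      (sbracket_mem_commSub S hx (S.ld_mem β δ y d hy hd)))
    (zsmul_mem (Submodule.apply_mem_map₂ _ Submodule.mem_top
      (sbracket_mem_commSub S hx hd)) _)

lemma map₂_rd_top_commSub_le {e : D} (hld : ∀ a, S.ld a e = a) :
    Submodule.map₂ S.rd ⊤ (commSub S) ≤ Submodule.map₂ S.ld (commSub S) ⊤ := by
  refine map₂_top_commSub_le S _ _ fun δ α β d x y hd hx hy => ?_
  rw [rd_sbracket_eq S hld α β δ]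
  exact sub_mem
    (zsmul_mem (Submodule.apply_mem_map₂ _
      (sbracket_mem_commSub S hx (S.rd_mem δ β d y hd hy)) Submodule.mem_top) _)
    (zsmul_mem (Submodule.apply_mem_map₂ _
      (sbracket_mem_commSub S hx hd) Submodule.mem_top) _)

lemma map₂_rd_commSub_top_le {e : D} (hld : ∀ a, S.ld a e = a) (hrd : ∀ a, S.rd e a = a) :
    Submodule.map₂ S.rd (commSub S) ⊤ ≤ Submodule.map₂ S.rd ⊤ (commSub S) := by
  refine map₂_commSub_top_le S _ _ fun γ α β c x y hc hx hy => ?_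
  have ld_le := map₂_ld_commSub_top_le S hrd
  have ld_mem : ∀ {γ α : ZMod 2} {u : D}, u ∈ S.grade γ → ∀ {v : D}, v ∈ S.grade α →
      ∀ w, S.ld (sbracket S γ α u v) w ∈ Submodule.map₂ S.rd ⊤ (commSub S) :=
    fun hu _ hv w => ld_le (Submodule.apply_mem_map₂ _ (sbracket_mem_commSub S hu hv)
      Submodule.mem_top)
  have rd_mem : ∀ {γ α : ZMod 2} {u : D}, u ∈ S.grade γ → ∀ {v : D}, v ∈ S.grade α →
      ∀ w, S.rd w (sbracket S γ α u v) ∈ Submodule.map₂ S.rd ⊤ (commSub S) :=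
    fun hu _ hv _ => Submodule.apply_mem_map₂ _ Submodule.mem_top (sbracket_mem_commSub S hu hv)
  have left_mem : S.ld c (sbracket S α β x y) ∈ Submodule.map₂ S.rd ⊤ (commSub S) :=
    ld_le (map₂_ld_top_commSub_le S hld
      (Submodule.apply_mem_map₂ _ Submodule.mem_top (sbracket_mem_commSub S hx hy)))
  rw [sbracket_rd_eq S α β γ]
  exact add_mem (sub_mem (add_mem (sub_mem (zsmul_mem left_mem _)
    (zsmul_mem (ld_mem hc hx y) _)) (zsmul_mem (ld_mem hc hy x) _))
    (zsmul_mem (rd_mem hc hy x) _)) (zsmul_mem (rd_mem hc hx y) _)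

end

/-- in a unital superdialgebra `D`,
`D ⊣ [D,D] ⊆ [D,D] ⊣ D`, `[D,D] ⊢ D ⊆ D ⊢ [D,D]` and `[D,D] ⊣ D = D ⊢ [D,D]`
(`S ⊣ T` resp. `S ⊢ T` denoting the span of the corresponding products). -/
theorem commutator_submodule_identities
    (S : Superdialgebra R D) (e : D) (he : IsBarUnit S e) :
    Submodule.map₂ S.ld ⊤ (commSub S) ≤ Submodule.map₂ S.ld (commSub S) ⊤ ∧
    Submodule.map₂ S.rd (commSub S) ⊤ ≤ Submodule.map₂ S.rd ⊤ (commSub S) ∧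
    Submodule.map₂ S.ld (commSub S) ⊤ = Submodule.map₂ S.rd ⊤ (commSub S) := by
  have hld : ∀ a, S.ld a e = a := fun a => (he.2 a).1
  have hrd : ∀ a, S.rd e a = a := fun a => (he.2 a).2
  exact ⟨map₂_ld_top_commSub_le S hld, map₂_rd_commSub_top_le S hld hrd,
    le_antisymm (map₂_ld_commSub_top_le S hrd) (map₂_rd_top_commSub_le S hld)⟩
end

section
/- Let D be a superdialgebra over R with a bar-unit 1, and let m, n be nonnegative integers with m + n ≥ 2. Then the commutator subalgebra sl(m,n,D) = [gl(m,n,D), gl(m,n,D)] of the general Leibniz superalgebra gl(m,n,D) equals {x ∈ gl(m,n,D) : Str₁(x) ∈ [D,D]}, where [D,D] is the R-submodule of D spanned by all a ⊣ b − (−1)^{|a||b|} b ⊢ a with a, b homogeneous. -/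
variable {R D : Type*} [CommRing R] [AddCommGroup D] [Module R D]

/-- The parity of the index `i ∈ {1,…,m+n}`: `0` for `i ≤ m` and `1` for `i > m`. -/
def pgr (m : ℕ) {N : ℕ} (i : Fin N) : ZMod 2 := if (i : ℕ) < m then 0 else 1

/-- Matrix product of matrices over a superdialgebra using `⊣` on entries. -/
def mLd (S : Superdialgebra R D) {N : ℕ} (x y : Matrix (Fin N) (Fin N) D) :
    Matrix (Fin N) (Fin N) D :=
  Matrix.of fun i j => ∑ l : Fin N, S.ld (x i l) (y l j)

/-- Matrix product of matrices over a superdialgebra using `⊢` on entries. -/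
def mRd (S : Superdialgebra R D) {N : ℕ} (x y : Matrix (Fin N) (Fin N) D) :
    Matrix (Fin N) (Fin N) D :=
  Matrix.of fun i j => ∑ l : Fin N, S.rd (x i l) (y l j)

/-- The grading of the general Leibniz superalgebra `gl(m,n,D)`: a matrix is homogeneous
of degree `α` when its `(i,j)` entry lies in `D_{α + p(i) + p(j)}` (i.e. `e_ij(a)` has
degree `p(i) + p(j) + |a|`). -/
def glGrade (S : Superdialgebra R D) (m n : ℕ) (α : ZMod 2) :
    Submodule R (Matrix (Fin (m + n)) (Fin (m + n)) D) where
  carrier := {x | ∀ i j, x i j ∈ S.grade (α + pgr m i + pgr m j)}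
  add_mem' := fun hx hy i j => Submodule.add_mem _ (hx i j) (hy i j)
  zero_mem' := fun _ _ => Submodule.zero_mem _
  smul_mem' := fun c _ hx i j => Submodule.smul_mem _ c (hx i j)

/-- `sl(m,n,D) = [gl(m,n,D), gl(m,n,D)]`: the `R`-span of all brackets
`[x,y] = x ⊣ y − (−1)^{|x||y|} y ⊢ x` of (homogeneous) elements of `gl(m,n,D)`. -/
def slSub (S : Superdialgebra R D) (m n : ℕ) :
    Submodule R (Matrix (Fin (m + n)) (Fin (m + n)) D) :=
  Submodule.span R {z | ∃ (α β : ZMod 2) (x y : Matrix (Fin (m + n)) (Fin (m + n)) D),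
    x ∈ glGrade S m n α ∧ y ∈ glGrade S m n β ∧ z = mLd S x y - ssign α β • mRd S y x}


def supertraceSign (p γ : ZMod 2) : ℤ := (-1 : ℤ) ^ (p * (p + γ)).val

theorem supertraceSign_mul_ssign (p q α β : ZMod 2) :
    supertraceSign p (α + β) * ssign (α + p + q) (β + q + p) =
      ssign α β * supertraceSign q (α + β) := by
  revert p q α β; decide

theorem supertraceSign_mul_supertraceSign (p q γ : ZMod 2) :
    supertraceSign p γ * supertraceSign q γ = ssign (γ + p + q) (0 + q + p) := by
  revert p q γ; decide

theorem of_sum_single_single {N : ℕ} (f : D →ₗ[R] D →ₗ[R] D) (i j k l : Fin N) (a b : D) :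
    (Matrix.of fun p q => ∑ t, f (Matrix.single i j a p t) (Matrix.single k l b t q)) =
      if j = k then Matrix.single i l (f a b) else 0 := by
  ext p q
  rw [Matrix.of_apply, Finset.sum_eq_single j (fun t _ ht => by simp [Matrix.single_apply, ht.symm])
    (by simp)]
  split_ifs with hjk
  · subst hjk
    by_cases hp : i = p <;> by_cases hq : l = q <;> simp [hp, hq]
  · simp [Matrix.single_apply, Ne.symm hjk]

namespace Superdialgebra

variable {S : Superdialgebra R D}

noncomputable instance (S : Superdialgebra R D) : DirectSum.Decomposition S.grade :=
  S.isInternal.chooseDecomposition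

theorem sbracket_mem_grade {α β : ZMod 2} {a b : D} (ha : a ∈ S.grade α) (hb : b ∈ S.grade β) :
    sbracket S α β a b ∈ S.grade (α + β) :=
  sub_mem (S.ld_mem α β a b ha hb) <|
    Submodule.smul_of_tower_mem _ _ (add_comm β α ▸ S.rd_mem β α b a hb ha)

theorem sbracket_mem_commSub {α β : ZMod 2} {a b : D} (ha : a ∈ S.grade α)
    (hb : b ∈ S.grade β) : sbracket S α β a b ∈ commSub S :=
  Submodule.subset_span ⟨α, β, a, b, ha, hb, rfl⟩

variable (S) in
/-- `θ_p a = Σ_γ (−1)^{p(p+γ)} a_γ`, where `a_γ` is the degree-`γ` component of `a`. -/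
noncomputable def twist (p : ZMod 2) : D →ₗ[R] D :=
  DirectSum.toModule R (ZMod 2) D (fun γ => supertraceSign p γ • (S.grade γ).subtype)
    ∘ₗ (DirectSum.decomposeLinearEquiv S.grade).toLinearMap

theorem twist_of_mem (p : ZMod 2) {γ : ZMod 2} {a : D} (ha : a ∈ S.grade γ) :
    S.twist p a = supertraceSign p γ • a := by
  simp [twist, DirectSum.decomposeLinearEquiv_apply_coe S.grade γ ⟨a, ha⟩,
    DirectSum.toModule_lof]

theorem twist_mem_commSub (p : ZMod 2) {c : D} (hc : c ∈ commSub S) :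
    S.twist p c ∈ commSub S := by
  suffices commSub S ≤ (commSub S).comap (S.twist p) from this hc
  refine Submodule.span_le.2 ?_
  rintro _ ⟨α, β, a, b, ha, hb, rfl⟩
  change S.twist p (sbracket S α β a b) ∈ commSub S
  rw [twist_of_mem p (sbracket_mem_grade ha hb)]
  exact Submodule.smul_of_tower_mem _ _ (sbracket_mem_commSub ha hb)

variable (S) in
noncomputable def supertrace (m n : ℕ) : Matrix (Fin (m + n)) (Fin (m + n)) D →ₗ[R] D :=
  ∑ i, S.twist (pgr m i) ∘ₗ Matrix.entryLinearMap R D i i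

theorem supertrace_apply (m n : ℕ) (x : Matrix (Fin (m + n)) (Fin (m + n)) D) :
    S.supertrace m n x = ∑ i, S.twist (pgr m i) (x i i) := by
  simp [supertrace]

variable (S) in
def IsSupertrace (m n : ℕ) (Str : Matrix (Fin (m + n)) (Fin (m + n)) D →ₗ[R] D) : Prop :=
  ∀ (i j : Fin (m + n)) (α : ZMod 2) (a : D), a ∈ S.grade α →
    Str (Matrix.single i j a) = if i = j then supertraceSign (pgr m i) α • a else 0

theorem isSupertrace_supertrace (m n : ℕ) : S.IsSupertrace m n (S.supertrace m n) := by
  intro i j α a ha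
  split_ifs with hij
  · subst hij
    simp [supertrace_apply, Matrix.single_apply, apply_ite, twist_of_mem _ ha]
  · refine (supertrace_apply m n _).trans (Finset.sum_eq_zero fun k _ => ?_)
    rw [Matrix.single_apply, if_neg (by rintro ⟨rfl, rfl⟩; exact hij rfl), map_zero]

theorem IsSupertrace.eq_supertrace {m n : ℕ}
    {Str : Matrix (Fin (m + n)) (Fin (m + n)) D →ₗ[R] D} (h : S.IsSupertrace m n Str) :
    Str = S.supertrace m n :=
  Matrix.ext_linearMap R fun i j => DirectSum.decompose_lhom_ext S.grade fun α =>
    LinearMap.ext fun a => by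
      simp [h i j α a a.2, isSupertrace_supertrace (S := S) m n i j α a a.2]

theorem supertrace_bracket_mem_commSub {m n : ℕ} {α β : ZMod 2}
    {x y : Matrix (Fin (m + n)) (Fin (m + n)) D} (hx : x ∈ glGrade S m n α)
    (hy : y ∈ glGrade S m n β) :
    S.supertrace m n (mLd S x y - ssign α β • mRd S y x) ∈ commSub S := by
  have hterm : ∀ i k, S.twist (pgr m i) (S.ld (x i k) (y k i)) -
      ssign α β • S.twist (pgr m k) (S.rd (y k i) (x i k)) ∈ commSub S := by
    intro i k
    have hld : S.ld (x i k) (y k i) ∈ S.grade (α + β) := by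
      convert S.ld_mem _ _ _ _ (hx i k) (hy k i) using 2; grind
    have hrd : S.rd (y k i) (x i k) ∈ S.grade (α + β) := by
      convert S.rd_mem _ _ _ _ (hy k i) (hx i k) using 2; grind
    rw [twist_of_mem _ hld, twist_of_mem _ hrd, smul_smul,
      ← supertraceSign_mul_ssign (pgr m i) (pgr m k), mul_smul, ← smul_sub]
    exact Submodule.smul_of_tower_mem _ _ (sbracket_mem_commSub (hx i k) (hy k i))
  suffices h : S.supertrace m n (mLd S x y - ssign α β • mRd S y x) =
      ∑ i, ∑ k, (S.twist (pgr m i) (S.ld (x i k) (y k i)) -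
        ssign α β • S.twist (pgr m k) (S.rd (y k i) (x i k))) by
    rw [h]
    exact Submodule.sum_mem _ fun i _ => Submodule.sum_mem _ fun k _ => hterm i k
  simp only [map_sub, map_zsmul, supertrace_apply, mLd, mRd, Matrix.of_apply, map_sum]
  rw [Finset.sum_comm (f := fun i k => S.twist (pgr m i) (S.rd (y i k) (x k i)))]
  simp only [Finset.smul_sum, ← Finset.sum_sub_distrib]

theorem slSub_le_comap_supertrace (m n : ℕ) :
    slSub S m n ≤ (commSub S).comap (S.supertrace m n) :=
  Submodule.span_le.2 fun _ ⟨_, _, _, _, hx, hy, hz⟩ => hz ▸ supertrace_bracket_mem_commSub hx hy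

theorem mLd_single_single {N : ℕ} (i j k l : Fin N) (a b : D) :
    mLd S (Matrix.single i j a) (Matrix.single k l b) =
      if j = k then Matrix.single i l (S.ld a b) else 0 :=
  of_sum_single_single S.ld i j k l a b

theorem mRd_single_single {N : ℕ} (i j k l : Fin N) (a b : D) :
    mRd S (Matrix.single i j a) (Matrix.single k l b) =
      if j = k then Matrix.single i l (S.rd a b) else 0 :=
  of_sum_single_single S.rd i j k l a b

theorem single_mem_glGrade {m n : ℕ} (i j : Fin (m + n)) {γ : ZMod 2} {a : D}
    (ha : a ∈ S.grade γ) : Matrix.single i j a ∈ glGrade S m n (γ + pgr m i + pgr m j) := by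
  intro p q
  by_cases h : i = p ∧ j = q
  · obtain ⟨rfl, rfl⟩ := h
    convert ha using 2 <;> grind [Matrix.single_apply_same]
  · rw [Matrix.single_apply, if_neg h]
    exact zero_mem _

theorem mem_of_forall_single_mem {N : ℕ} {P : Submodule R (Matrix (Fin N) (Fin N) D)}
    (h : ∀ i j (γ : ZMod 2) (a : D), a ∈ S.grade γ → Matrix.single i j a ∈ P)
    (x : Matrix (Fin N) (Fin N) D) : x ∈ P := by
  rw [Matrix.matrix_eq_sum_single x]
  refine Submodule.sum_mem _ fun i _ => Submodule.sum_mem _ fun j _ => ?_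
  refine DirectSum.Decomposition.inductionOn S.grade (motive := fun a => Matrix.single i j a ∈ P)
    ?_ (fun a => h i j _ a a.2) (fun a b ha hb => ?_) (x i j)
  · simp
  · simpa [Matrix.single_add] using add_mem ha hb

theorem bracket_mem_slSub {m n : ℕ} {α β : ZMod 2}
    {x y : Matrix (Fin (m + n)) (Fin (m + n)) D} (hx : x ∈ glGrade S m n α)
    (hy : y ∈ glGrade S m n β) : mLd S x y - ssign α β • mRd S y x ∈ slSub S m n :=
  Submodule.subset_span ⟨α, β, x, y, hx, hy, rfl⟩

variable {e : D}

theorem single_mem_slSub_of_ne (he : IsBarUnit S e) {m n : ℕ} {i j : Fin (m + n)} (hij : i ≠ j)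
    {γ : ZMod 2} {a : D} (ha : a ∈ S.grade γ) : Matrix.single i j a ∈ slSub S m n := by
  have := bracket_mem_slSub (single_mem_glGrade i j ha) (single_mem_glGrade j j he.1)
  rwa [mLd_single_single, mRd_single_single, if_pos rfl, if_neg hij.symm, (he.2 a).1, smul_zero,
    sub_zero] at this

theorem single_sub_smul_single_mem_slSub (he : IsBarUnit S e) {m n : ℕ} (i j : Fin (m + n))
    {γ : ZMod 2} {a : D} (ha : a ∈ S.grade γ) :
    Matrix.single i i a - ssign (γ + pgr m i + pgr m j) (0 + pgr m j + pgr m i) •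
      Matrix.single j j a ∈ slSub S m n := by
  have := bracket_mem_slSub (single_mem_glGrade i j ha) (single_mem_glGrade j i he.1)
  rwa [mLd_single_single, mRd_single_single, if_pos rfl, if_pos rfl, (he.2 a).1, (he.2 a).2]
    at this

theorem single_mem_slSub_of_mem_commSub {m n : ℕ} (i : Fin (m + n)) {c : D}
    (hc : c ∈ commSub S) : Matrix.single i i c ∈ slSub S m n := by
  suffices commSub S ≤ (slSub S m n).comap (Matrix.singleLinearMap R i i) from this hc
  refine Submodule.span_le.2 ?_
  rintro _ ⟨α, β, a, b, ha, hb, rfl⟩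
  have := bracket_mem_slSub (single_mem_glGrade i i ha) (single_mem_glGrade i i hb)
  rw [mLd_single_single, mRd_single_single, if_pos rfl, if_pos rfl,
    show α + pgr m i + pgr m i = α by grind, show β + pgr m i + pgr m i = β by grind] at this
  rw [SetLike.mem_coe, Submodule.mem_comap, map_sub, map_zsmul]
  exact this

theorem sub_single_twist_supertrace_mem_slSub (he : IsBarUnit S e) {m n : ℕ}
    (i₀ : Fin (m + n)) (x : Matrix (Fin (m + n)) (Fin (m + n)) D) :
    x - Matrix.single i₀ i₀ (S.twist (pgr m i₀) (S.supertrace m n x)) ∈ slSub S m n := by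
  let f := LinearMap.id -
    Matrix.singleLinearMap R i₀ i₀ ∘ₗ S.twist (pgr m i₀) ∘ₗ S.supertrace m n
  change x ∈ (slSub S m n).comap f
  refine mem_of_forall_single_mem (S := S) (fun i j γ a ha => ?_) x
  simp only [Submodule.mem_comap, f, LinearMap.sub_apply, LinearMap.id_apply,
    LinearMap.comp_apply, isSupertrace_supertrace m n i j γ a ha]
  split_ifs with hij
  · subst hij
    rw [map_zsmul, twist_of_mem _ ha, smul_smul, supertraceSign_mul_supertraceSign,
      Matrix.singleLinearMap_apply, ← Matrix.smul_single]
    exact single_sub_smul_single_mem_slSub he i i₀ ha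
  · simpa using single_mem_slSub_of_ne he hij ha

theorem comap_supertrace_le_slSub (he : IsBarUnit S e) (m n : ℕ) :
    (commSub S).comap (S.supertrace m n) ≤ slSub S m n := by
  intro x hx
  rcases isEmpty_or_nonempty (Fin (m + n)) with _ | ⟨⟨i₀⟩⟩
  · simp [Subsingleton.elim x 0]
  · simpa using add_mem (sub_single_twist_supertrace_mem_slSub he i₀ x)
      (single_mem_slSub_of_mem_commSub i₀ (twist_mem_commSub (pgr m i₀) hx))

end Superdialgebra

theorem sl_eq_supertrace_preimage_general
    (S : Superdialgebra R D) (e : D) (he : IsBarUnit S e)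
    (m n : ℕ) :
    (∃ Str : Matrix (Fin (m + n)) (Fin (m + n)) D →ₗ[R] D,
      ∀ (i j : Fin (m + n)) (α : ZMod 2) (a : D), a ∈ S.grade α →
        Str (Matrix.single i j a) =
          if i = j then ((-1 : ℤ) ^ (pgr m i * (pgr m i + α)).val) • a else 0) ∧
    (∀ Str : Matrix (Fin (m + n)) (Fin (m + n)) D →ₗ[R] D,
      (∀ (i j : Fin (m + n)) (α : ZMod 2) (a : D), a ∈ S.grade α →
        Str (Matrix.single i j a) =
          if i = j then ((-1 : ℤ) ^ (pgr m i * (pgr m i + α)).val) • a else 0) →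
      slSub S m n = Submodule.comap Str (commSub S)) := by
  refine ⟨⟨S.supertrace m n, Superdialgebra.isSupertrace_supertrace m n⟩, fun Str hStr => ?_⟩
  rw [Superdialgebra.IsSupertrace.eq_supertrace (S := S) hStr]
  exact le_antisymm (Superdialgebra.slSub_le_comap_supertrace m n)
    (Superdialgebra.comap_supertrace_le_slSub he m n)

/-- for a unital superdialgebra `D` and `m + n ≥ 2`,
`sl(m,n,D) = {x ∈ gl(m,n,D) : Str₁(x) ∈ [D,D]}`, where `Str₁` is the supertrace, the
linear map determined on matrix units with homogeneous entry `a` of degree `α` by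
`Str₁(e_ij(a)) = (−1)^{p(i)(p(i)+α)} a` if `i = j` and `0` otherwise. -/
theorem sl_eq_supertrace_preimage
    (S : Superdialgebra R D) (e : D) (he : IsBarUnit S e)
    (m n : ℕ) (hmn : 2 ≤ m + n) :
    (∃ Str : Matrix (Fin (m + n)) (Fin (m + n)) D →ₗ[R] D,
      ∀ (i j : Fin (m + n)) (α : ZMod 2) (a : D), a ∈ S.grade α →
        Str (Matrix.single i j a) =
          if i = j then ((-1 : ℤ) ^ (pgr m i * (pgr m i + α)).val) • a else 0) ∧
    (∀ Str : Matrix (Fin (m + n)) (Fin (m + n)) D →ₗ[R] D,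
      (∀ (i j : Fin (m + n)) (α : ZMod 2) (a : D), a ∈ S.grade α →
        Str (Matrix.single i j a) =
          if i = j then ((-1 : ℤ) ^ (pgr m i * (pgr m i + α)).val) • a else 0) →
      slSub S m n = Submodule.comap Str (commSub S)) :=
  sl_eq_supertrace_preimage_general S e he m n
end

section
/- Let D be a superdialgebra over R with a bar-unit 1, and let m, n be nonnegative integers with m + n ≥ 3. Then the special linear Leibniz superalgebra sl(m,n,D) = [gl(m,n,D), gl(m,n,D)] is perfect: sl(m,n,D) equals the R-span of all brackets [x,y] with x, y ∈ sl(m,n,D). -/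
variable {R D : Type*} [CommRing R] [AddCommGroup D] [Module R D]

/-!
A bracket of homogeneous matrices is a sum of brackets of matrix units `e_ij(a)`, which are
computed entrywise. An off-diagonal unit lies in `sl`, as `e_ij(c) = [e_ij(c), e_jj(1)]`, and then
also in `[sl, sl]`, as `e_ij(c) = [e_ik(c), e_kj(1)]` for any third index `k` (this is where
`m + n ≥ 3` enters). A bracket of two units is an off-diagonal unit, a bracket of two off-diagonal
units, or a diagonal element `e_ii(a ⊣ b) ∓ e_ii(b ⊢ a)`; the latter equals
`[e_ik(a), e_ki(b)] ± [e_ki(b ⊢ a), e_ik(1)]`.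
-/

open Matrix

namespace Matrix

variable {ι M N P : Type*} [Fintype ι] [AddCommGroup M] [Module R M] [AddCommGroup N] [Module R N]
  [AddCommGroup P] [Module R P]

def bilinMul {κ ν : Type*} (f : M →ₗ[R] N →ₗ[R] P) :
    Matrix κ ι M →ₗ[R] Matrix ι ν N →ₗ[R] Matrix κ ν P :=
  LinearMap.mk₂ R (fun x y => of fun i j => ∑ l, f (x i l) (y l j))
    (fun _ _ _ => by ext; simp [Finset.sum_add_distrib])
    (fun _ _ _ => by ext; simp [Finset.smul_sum])
    (fun _ _ _ => by ext; simp [Finset.sum_add_distrib])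
    (fun _ _ _ => by ext; simp [Finset.smul_sum])

theorem bilinMul_single_single [DecidableEq ι] {κ ν : Type*} [DecidableEq κ] [DecidableEq ν]
    (f : M →ₗ[R] N →ₗ[R] P) (i : κ) (j k : ι) (l : ν) (a : M) (b : N) :
    bilinMul f (single i j a) (single k l b) = if j = k then single i l (f a b) else 0 := by
  ext p q
  rw [bilinMul, LinearMap.mk₂_apply, of_apply,
    Fintype.sum_eq_single j fun r hr => by simp [hr.symm]]
  rcases eq_or_ne j k with rfl | hjk
  · by_cases hp : i = p <;> by_cases hq : l = q <;> simp [hp, hq]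
  · simp [hjk, hjk.symm, single_apply]

end Matrix

theorem ssign_add_mul_ssign_add (α β γ : ZMod 2) :
    ssign (α + γ) (β + γ) * ssign (α + β + γ) γ = ssign α β := by
  revert α β γ; decide

section Superdialgebra

variable (S : Superdialgebra R D)

def glBracket {ι : Type*} [Fintype ι] (α β : ZMod 2) :
    Matrix ι ι D →ₗ[R] Matrix ι ι D →ₗ[R] Matrix ι ι D :=
  bilinMul S.ld - ssign α β • (bilinMul S.rd).flip

theorem glBracket_apply {N : ℕ} (α β : ZMod 2) (x y : Matrix (Fin N) (Fin N) D) :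
    glBracket S α β x y = mLd S x y - ssign α β • mRd S y x :=
  rfl

theorem glBracket_single_single {ι : Type*} [Fintype ι] [DecidableEq ι] (α β : ZMod 2)
    (i j k l : ι) (a b : D) :
    glBracket S α β (single i j a) (single k l b) =
      (if j = k then single i l (S.ld a b) else 0) -
        ssign α β • (if l = i then single k j (S.rd b a) else 0) := by
  simp [glBracket, bilinMul_single_single]

end Superdialgebra

def glBracketSpan (S : Superdialgebra R D) (m n : ℕ)
    (L : Submodule R (Matrix (Fin (m + n)) (Fin (m + n)) D)) :
    Submodule R (Matrix (Fin (m + n)) (Fin (m + n)) D) :=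
  Submodule.span R {z | ∃ (α β : ZMod 2) (x y : Matrix (Fin (m + n)) (Fin (m + n)) D),
    x ∈ glGrade S m n α ∧ y ∈ glGrade S m n β ∧ x ∈ L ∧ y ∈ L ∧
    z = mLd S x y - ssign α β • mRd S y x}

section GeneralLinear

variable {S : Superdialgebra R D} {m n : ℕ}

theorem single_mem_glGrade {γ δ : ZMod 2} {i j : Fin (m + n)} {a : D} (ha : a ∈ S.grade δ)
    (hγ : γ + pgr m i + pgr m j = δ) : single i j a ∈ glGrade S m n γ := by
  intro p q
  rw [single_apply]
  split_ifs with h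
  · obtain ⟨rfl, rfl⟩ := h
    rwa [hγ]
  · exact zero_mem _

theorem glBracket_mem_slSub {α β : ZMod 2} {x y : Matrix (Fin (m + n)) (Fin (m + n)) D}
    (hx : x ∈ glGrade S m n α) (hy : y ∈ glGrade S m n β) :
    glBracket S α β x y ∈ slSub S m n :=
  Submodule.subset_span ⟨α, β, x, y, hx, hy, glBracket_apply S α β x y⟩

theorem glBracket_mem_glBracketSpan {L : Submodule R (Matrix (Fin (m + n)) (Fin (m + n)) D)}
    {α β : ZMod 2} {x y : Matrix (Fin (m + n)) (Fin (m + n)) D}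
    (hx : x ∈ glGrade S m n α) (hy : y ∈ glGrade S m n β) (hxL : x ∈ L) (hyL : y ∈ L) :
    glBracket S α β x y ∈ glBracketSpan S m n L :=
  Submodule.subset_span ⟨α, β, x, y, hx, hy, hxL, hyL, glBracket_apply S α β x y⟩

theorem glBracketSpan_le_slSub (L : Submodule R (Matrix (Fin (m + n)) (Fin (m + n)) D)) :
    glBracketSpan S m n L ≤ slSub S m n :=
  Submodule.span_mono fun _ ⟨α, β, x, y, hx, hy, _, _, hz⟩ => ⟨α, β, x, y, hx, hy, hz⟩

variable {e : D} (he : IsBarUnit S e)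
include he

theorem single_mem_slSub {δ : ZMod 2} {i j : Fin (m + n)} (hij : i ≠ j) {c : D}
    (hc : c ∈ S.grade δ) : single i j c ∈ slSub S m n := by
  have hx : single i j c ∈ glGrade S m n (δ + pgr m i + pgr m j) :=
    single_mem_glGrade hc (by grind)
  have hy : single j j e ∈ glGrade S m n 0 := single_mem_glGrade he.1 (by grind)
  simpa [glBracket_single_single, hij.symm, (he.2 c).1] using glBracket_mem_slSub hx hy

theorem single_mem_glBracketSpan_slSub (hmn : 3 ≤ m + n) {δ : ZMod 2} {i j : Fin (m + n)}
    (hij : i ≠ j) {c : D} (hc : c ∈ S.grade δ) :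
    single i j c ∈ glBracketSpan S m n (slSub S m n) := by
  obtain ⟨k, hki, hkj⟩ := Fin.exists_ne_and_ne_of_two_lt i j hmn
  have hx : single i k c ∈ glGrade S m n (δ + pgr m i + pgr m k) :=
    single_mem_glGrade hc (by grind)
  have hy : single k j e ∈ glGrade S m n (pgr m k + pgr m j) :=
    single_mem_glGrade he.1 (by grind)
  simpa [glBracket_single_single, hij.symm, (he.2 c).1] using
    glBracket_mem_glBracketSpan hx hy (single_mem_slSub he hki.symm hc)
      (single_mem_slSub he hkj he.1)

theorem single_sub_single_mem_glBracketSpan_slSub (hmn : 3 ≤ m + n) (i : Fin (m + n))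
    {α β : ZMod 2} {a b : D} (ha : a ∈ S.grade α) (hb : b ∈ S.grade β) :
    single i i (S.ld a b) - ssign α β • single i i (S.rd b a) ∈
      glBracketSpan S m n (slSub S m n) := by
  obtain ⟨k, hki, -⟩ := Fin.exists_ne_and_ne_of_two_lt i i hmn
  set γ := pgr m i + pgr m k
  have hba : S.rd b a ∈ S.grade (α + β) := add_comm β α ▸ S.rd_mem β α b a hb ha
  have h₁ := glBracket_mem_glBracketSpan (α := α + γ) (β := β + γ)
    (single_mem_glGrade ha (by grind)) (single_mem_glGrade hb (by grind))
    (single_mem_slSub he hki.symm ha) (single_mem_slSub he hki hb)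
  have h₂ := glBracket_mem_glBracketSpan (α := α + β + γ) (β := γ)
    (single_mem_glGrade hba (by grind)) (single_mem_glGrade he.1 (by grind))
    (single_mem_slSub he hki hba) (single_mem_slSub he hki.symm he.1)
  rw [glBracket_single_single, if_pos rfl, if_pos rfl] at h₁ h₂
  rw [(he.2 _).1, (he.2 _).2] at h₂
  convert add_mem h₁ (zsmul_mem h₂ (ssign (α + γ) (β + γ))) using 1
  rw [smul_sub, smul_smul, ssign_add_mul_ssign_add]
  abel

theorem glBracket_single_single_mem_glBracketSpan_slSub (hmn : 3 ≤ m + n) {α β : ZMod 2}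
    {i j k l : Fin (m + n)} {a b : D} (ha : a ∈ S.grade (α + pgr m i + pgr m j))
    (hb : b ∈ S.grade (β + pgr m k + pgr m l)) :
    glBracket S α β (single i j a) (single k l b) ∈ glBracketSpan S m n (slSub S m n) := by
  rcases eq_or_ne j k with rfl | hjk
  · rcases eq_or_ne l i with rfl | hli
    · rcases eq_or_ne l j with rfl | hlj
      · rw [glBracket_single_single, if_pos rfl, if_pos rfl]
        exact single_sub_single_mem_glBracketSpan_slSub he hmn l
          (by rwa [show α + pgr m l + pgr m l = α by grind] at ha)
          (by rwa [show β + pgr m l + pgr m l = β by grind] at hb)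
      · exact glBracket_mem_glBracketSpan (single_mem_glGrade ha rfl)
          (single_mem_glGrade hb rfl) (single_mem_slSub he hlj ha)
          (single_mem_slSub he hlj.symm hb)
    · rw [glBracket_single_single, if_pos rfl, if_neg hli, smul_zero, sub_zero]
      exact single_mem_glBracketSpan_slSub he hmn hli.symm (S.ld_mem _ _ a b ha hb)
  · rw [glBracket_single_single, if_neg hjk]
    rcases eq_or_ne l i with rfl | hli
    · rw [if_pos rfl, zero_sub]
      exact neg_mem (zsmul_mem
        (single_mem_glBracketSpan_slSub he hmn hjk.symm (S.rd_mem _ _ b a hb ha)) _)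
    · rw [if_neg hli, smul_zero, sub_zero]
      exact zero_mem _

theorem glBracket_mem_glBracketSpan_slSub (hmn : 3 ≤ m + n) {α β : ZMod 2}
    {x y : Matrix (Fin (m + n)) (Fin (m + n)) D} (hx : x ∈ glGrade S m n α)
    (hy : y ∈ glGrade S m n β) : glBracket S α β x y ∈ glBracketSpan S m n (slSub S m n) := by
  rw [matrix_eq_sum_single x, matrix_eq_sum_single y]
  simp only [map_sum, LinearMap.sum_apply]
  exact Submodule.sum_mem _ fun k _ => Submodule.sum_mem _ fun l _ =>
    Submodule.sum_mem _ fun i _ => Submodule.sum_mem _ fun j _ =>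
      glBracket_single_single_mem_glBracketSpan_slSub he hmn (hx i j) (hy k l)

end GeneralLinear

/-- for a unital superdialgebra `D` and `m + n ≥ 3`, the special linear
Leibniz superalgebra `sl(m,n,D)` is perfect: it equals the `R`-span of the brackets
`[x,y] = x ⊣ y − (−1)^{|x||y|} y ⊢ x` of its own (homogeneous) elements. -/
theorem sl_perfect
    (S : Superdialgebra R D) (e : D) (he : IsBarUnit S e)
    (m n : ℕ) (hmn : 3 ≤ m + n) :
    slSub S m n =
      Submodule.span R {z | ∃ (α β : ZMod 2) (x y : Matrix (Fin (m + n)) (Fin (m + n)) D),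
        x ∈ glGrade S m n α ∧ y ∈ glGrade S m n β ∧ x ∈ slSub S m n ∧ y ∈ slSub S m n ∧
        z = mLd S x y - ssign α β • mRd S y x} := by
  show slSub S m n = glBracketSpan S m n (slSub S m n)
  refine le_antisymm (Submodule.span_le.2 ?_) (glBracketSpan_le_slSub (slSub S m n))
  rintro _ ⟨α, β, x, y, hx, hy, rfl⟩
  exact glBracket_mem_glBracketSpan_slSub he hmn hx hy
end
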